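/- arXiv:1702.04631 — 2 statements merged into one kernel-verified Lean document; each statement's English description precedes it below -/
import Mathlib

section
/- Let f(w) = exp(−i/w) for w ≠ 0, and for n ≥ 1 and z ≠ 0 define D_n(z) = −i · Σ_{k=1}^{n} (−1)^{k+1} · k! · B_{n,k}(f′(z), …, f^{(n−k+1)}(z)) · exp(i·k/z). Let Q ≥ 1 and let n₁, …, n_Q be positive integers with n₁ + ⋯ + n_Q = N. Then there exist complex coefficients c_{N+Q}, …, c_{2N} such that for all z ≠ 0, ∏_{j=1}^{Q} D_{n_j}(z)/(n_j!) = Σ_{m=N+Q}^{2N} c_m · z^{−m}, and the lowest-order coefficient satisfies c_{N+Q} = (−1)^{N+Q}. -/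
/-- The incomplete Bell polynomial `B_{n,k}(x₁, …, x_{n−k+1})`: the sum over all tuples
`(p₁, …, p_{n−k+1})` of nonnegative integers with `p₁ + ⋯ + p_{n−k+1} = k` and
`p₁ + 2p₂ + ⋯ + (n−k+1)p_{n−k+1} = n` of
`n!/(p₁!⋯p_{n−k+1}!) · ∏ᵢ (xᵢ/i!)^{pᵢ}`.  (Each `pᵢ` is at most `k ≤ n`, so the
bounded index finset captures all solutions.)  The argument `x j` stands for `x_j`. -/
noncomputable def bellPoly (n k : ℕ) (x : ℕ → ℂ) : ℂ :=
  ∑ p ∈ Finset.filter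
      (fun p : Fin (n - k + 1) → ℕ =>
        (∑ i : Fin (n - k + 1), p i) = k ∧ (∑ i : Fin (n - k + 1), ((i : ℕ) + 1) * p i) = n)
      (Fintype.piFinset fun _ : Fin (n - k + 1) => Finset.range (n + 1)),
    ((n.factorial : ℂ) / ∏ i : Fin (n - k + 1), ((p i).factorial : ℂ)) *
      ∏ i : Fin (n - k + 1), (x ((i : ℕ) + 1) / (((i : ℕ) + 1).factorial : ℂ)) ^ p i

/-- The paper's quantity `D_n(f(z); z)` for `f(w) = exp(−i/w)`:
`D_n(z) = −i Σ_{k=1}^{n} (−1)^{k+1} k! B_{n,k}(f′(z), …, f⁽ⁿ⁻ᵏ⁺¹⁾(z)) · exp(i k/z)`,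
where `1/(f(z) − f(0))^k` is interpreted as `exp(i k/z)` since `f(0) = 0` as a limit
along the positive imaginary axis. -/
noncomputable def Dfun (n : ℕ) (z : ℂ) : ℂ :=
  -Complex.I * ∑ k ∈ Finset.Icc 1 n,
    (-1 : ℂ) ^ (k + 1) * (k.factorial : ℂ) *
      bellPoly n k (fun j => iteratedDeriv j (fun w => Complex.exp (-Complex.I / w)) z) *
      Complex.exp (Complex.I * k / z)

/-! With `f(w) = exp(−i/w)`, induction gives `f⁽ʲ⁾(w) = f(w) · P_j(1/w)` where
`P_{j+1}(x) = x² (i P_j(x) − P_j'(x))`; for `j ≥ 1` the monomials of `P_j` have degrees in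
`[j + 1, 2j]` and the lowest one has coefficient `(−1)^{j+1} j! i`. Since `B_{n,k}` is homogeneous
of degree `k`, the factor `f(z)^k` it produces cancels `exp(ik/z)`, so `D_n(z)` is a polynomial
in `1/z` whose `k`-th term has degrees in `[n + k, 2n]`. Only `k = 1`, where `B_{n,1} = x_n`,
reaches degree `n + 1`, so `D_n` has lowest coefficient `(−1)^{n+1} n!` there; in the product
the lowest degrees add and the lowest coefficients multiply. -/

open Polynomial Finset Complex

namespace Polynomial

variable {R : Type*}

theorem eval_eq_sum_Icc_of_X_pow_dvd [Semiring R] {p : R[X]} {a b : ℕ} (ha : X ^ a ∣ p)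
    (hb : p.natDegree ≤ b) (x : R) :
    p.eval x = ∑ m ∈ Icc a b, p.coeff m * x ^ m := by
  rw [eval_eq_sum_range' (Nat.lt_succ_of_le hb)]
  refine (sum_subset (fun m hm => ?_) fun m hm hm' => ?_).symm
  · simp only [mem_Icc, mem_range] at hm ⊢; omega
  · simp only [mem_Icc, mem_range, not_and, not_le] at hm hm'
    rw [X_pow_dvd_iff.1 ha m (by omega), zero_mul]

theorem coeff_prod_of_X_pow_dvd [CommSemiring R] {ι : Type*} (s : Finset ι) (f : ι → R[X])
    (a : ι → ℕ) (h : ∀ i ∈ s, X ^ a i ∣ f i) :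
    (∏ i ∈ s, f i).coeff (∑ i ∈ s, a i) = ∏ i ∈ s, (f i).coeff (a i) := by
  choose! g hg using h
  have hcoeff : ∀ i ∈ s, (f i).coeff (a i) = (g i).coeff 0 := fun i hi => by
    rw [hg i hi, ← coeff_X_pow_mul (g i) (a i) 0, zero_add]
  rw [prod_congr rfl hg, prod_mul_distrib, prod_pow_eq_pow_sum, prod_congr rfl hcoeff,
    ← coeff_zero_prod, ← coeff_X_pow_mul _ _ 0, zero_add]

end Polynomial

noncomputable def bellIndex (n k : ℕ) : Finset (Fin (n - k + 1) → ℕ) :=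
  filter (fun p : Fin (n - k + 1) → ℕ =>
      (∑ i : Fin (n - k + 1), p i) = k ∧ (∑ i : Fin (n - k + 1), ((i : ℕ) + 1) * p i) = n)
    (Fintype.piFinset fun _ : Fin (n - k + 1) => range (n + 1))

theorem bellPoly_const_mul (n k : ℕ) (c : ℂ) (x : ℕ → ℂ) :
    bellPoly n k (fun j => c * x j) = c ^ k * bellPoly n k x := by
  change ∑ p ∈ bellIndex n k, _ = c ^ k * ∑ p ∈ bellIndex n k, _
  rw [mul_sum]
  refine sum_congr rfl fun p hp => ?_
  have hk : ∑ i, p i = k := (mem_filter.1 hp).2.1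
  simp only [mul_div_assoc, mul_pow, prod_mul_distrib, prod_pow_eq_pow_sum, hk]
  ring

noncomputable def bellPolynomial (n k : ℕ) (x : ℕ → ℂ[X]) : ℂ[X] :=
  ∑ p ∈ bellIndex n k,
    C ((n.factorial : ℂ) / ∏ i : Fin (n - k + 1), ((p i).factorial : ℂ)) *
      ∏ i : Fin (n - k + 1), (C ((((i : ℕ) + 1).factorial : ℂ))⁻¹ * x ((i : ℕ) + 1)) ^ p i

theorem eval_bellPolynomial (n k : ℕ) (x : ℕ → ℂ[X]) (w : ℂ) :
    (bellPolynomial n k x).eval w = bellPoly n k (fun j => (x j).eval w) := by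
  simp only [bellPolynomial, bellPoly, bellIndex, eval_finsetSum, eval_mul, eval_C, eval_prod,
    eval_pow, div_eq_inv_mul]

theorem X_pow_dvd_bellPolynomial (n k : ℕ) {x : ℕ → ℂ[X]} (hx : ∀ j, 1 ≤ j → X ^ (j + 1) ∣ x j) :
    X ^ (n + k) ∣ bellPolynomial n k x := by
  refine dvd_sum fun p hp => Dvd.dvd.mul_left ?_ _
  obtain ⟨hk, hn⟩ := (mem_filter.1 hp).2
  have hdeg : ∑ i : Fin (n - k + 1), ((i : ℕ) + 2) * p i
      = ∑ i : Fin (n - k + 1), ((i : ℕ) + 1) * p i + ∑ i : Fin (n - k + 1), p i := by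
    rw [← sum_add_distrib]
    exact sum_congr rfl fun i _ => by ring
  rw [hn, hk] at hdeg
  rw [← hdeg, ← prod_pow_eq_pow_sum]
  refine prod_dvd_prod_of_dvd _ _ fun i _ => ?_
  rw [pow_mul]
  exact pow_dvd_pow_of_dvd ((hx _ (by omega)).mul_left _) _

theorem natDegree_bellPolynomial_le (n k : ℕ) {x : ℕ → ℂ[X]}
    (hx : ∀ j, (x j).natDegree ≤ 2 * j) : (bellPolynomial n k x).natDegree ≤ 2 * n := by
  refine natDegree_sum_le_of_forall_le _ _ fun p hp => ?_
  have hn : ∑ i : Fin (n - k + 1), ((i : ℕ) + 1) * p i = n := (mem_filter.1 hp).2.2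
  refine (natDegree_C_mul_le _ _).trans ((natDegree_prod_le _ _).trans ?_)
  calc _ ≤ ∑ i : Fin (n - k + 1), 2 * (((i : ℕ) + 1) * p i) := by
        refine sum_le_sum fun i _ => natDegree_pow_le.trans ?_
        have := (natDegree_C_mul_le ((((i : ℕ) + 1).factorial : ℂ))⁻¹ _).trans (hx ((i : ℕ) + 1))
        exact (Nat.mul_le_mul_left (p i) this).trans_eq (by ring)
    _ = 2 * n := by rw [← mul_sum, hn]

theorem bellIndex_one {n : ℕ} (hn : 1 ≤ n) :
    bellIndex n 1 = {Pi.single (Fin.last (n - 1)) 1} := by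
  ext p
  simp only [bellIndex, mem_filter, Fintype.mem_piFinset, mem_range, mem_singleton]
  constructor
  · rintro ⟨-, h1, hn'⟩
    have hzero : ∀ j ≠ Fin.last (n - 1), p j = 0 := by
      have hsplit : ∑ j : Fin (n - 1 + 1), (n - ((j : ℕ) + 1)) * p j
          + ∑ j : Fin (n - 1 + 1), ((j : ℕ) + 1) * p j = n * ∑ j : Fin (n - 1 + 1), p j := by
        rw [← sum_add_distrib, mul_sum]
        exact sum_congr rfl fun j _ => by rw [← add_mul, Nat.sub_add_cancel (by omega)]
      rw [h1, hn', mul_one, add_eq_right, sum_eq_zero_iff] at hsplit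
      intro j hj
      have hj' : (j : ℕ) < n - 1 := Fin.val_lt_last hj
      simpa [show n - ((j : ℕ) + 1) ≠ 0 by omega] using hsplit j (mem_univ j)
    have hlast : p (Fin.last (n - 1)) = 1 := by
      rw [← sum_eq_single _ (fun j _ hj => hzero j hj) (fun h => absurd (mem_univ _) h), h1]
    funext j
    by_cases hj : j = Fin.last (n - 1)
    · subst hj; simp [hlast]
    · simp [hzero j hj, hj]
  · rintro rfl
    refine ⟨fun i => ?_, ?_, ?_⟩
    · simp only [Pi.single_apply]; split <;> omega
    · simp
    · simp [Pi.single_apply]; omega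

theorem bellPolynomial_one {n : ℕ} (hn : 1 ≤ n) (x : ℕ → ℂ[X]) :
    bellPolynomial n 1 x = x n := by
  have hfact : ∀ i : Fin (n - 1 + 1),
      ((Pi.single (Fin.last (n - 1)) 1 : Fin (n - 1 + 1) → ℕ) i).factorial = 1 := fun i => by
    rcases eq_or_ne i (Fin.last (n - 1)) with rfl | hi <;> simp [*]
  rw [bellPolynomial, bellIndex_one hn, sum_singleton]
  simp only [hfact, Nat.cast_one, prod_const_one, div_one]
  rw [Fintype.prod_eq_single (Fin.last (n - 1)) fun j hj => by simp [hj]]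
  simp only [Pi.single_eq_same, pow_one, Fin.val_last, Nat.sub_add_cancel hn, ← mul_assoc, ← C_mul]
  rw [mul_inv_cancel₀ (by exact_mod_cast n.factorial_ne_zero), C_1, one_mul]

/-- `derivPoly j` is the polynomial `P_j` with `f⁽ʲ⁾(w) = f(w) · P_j(1/w)` for `f(w) = exp(−i/w)`. -/
noncomputable def derivPoly : ℕ → ℂ[X]
  | 0 => 1
  | j + 1 => (C I * derivPoly j - derivative (derivPoly j)) * X ^ 2

theorem hasDerivAt_exp_mul_eval_inv (P : ℂ[X]) {z : ℂ} (hz : z ≠ 0) :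
    HasDerivAt (fun w => exp (-I / w) * P.eval w⁻¹)
      (exp (-I / z) * ((C I * P - derivative P) * X ^ 2).eval z⁻¹) z := by
  have hinv : HasDerivAt (fun w : ℂ => w⁻¹) (-(z ^ 2)⁻¹) z := hasDerivAt_inv hz
  have hexp : HasDerivAt (fun w : ℂ => exp (-I / w)) (exp (-I / z) * (-I * -(z ^ 2)⁻¹)) z := by
    simpa only [div_eq_mul_inv] using (hinv.const_mul (-I)).cexp
  have hprod : HasDerivAt (fun w => exp (-I / w) * P.eval w⁻¹)
      (exp (-I / z) * (-I * -(z ^ 2)⁻¹) * P.eval z⁻¹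
        + exp (-I / z) * ((derivative P).eval z⁻¹ * -(z ^ 2)⁻¹)) z :=
    hexp.mul ((P.hasDerivAt z⁻¹).comp z hinv)
  convert hprod using 1
  simp only [eval_mul, eval_sub, eval_pow, eval_X, eval_C, inv_pow]
  ring

theorem iteratedDeriv_exp_neg_I_div (j : ℕ) {z : ℂ} (hz : z ≠ 0) :
    iteratedDeriv j (fun w => exp (-I / w)) z = exp (-I / z) * (derivPoly j).eval z⁻¹ := by
  induction j generalizing z with
  | zero => simp [derivPoly]
  | succ j ih =>
    have hev : iteratedDeriv j (fun w => exp (-I / w)) =ᶠ[nhds z]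
        fun w => exp (-I / w) * (derivPoly j).eval w⁻¹ :=
      Filter.eventually_of_mem (compl_singleton_mem_nhds hz) fun w hw => ih hw
    rw [iteratedDeriv_succ, hev.deriv_eq, (hasDerivAt_exp_mul_eval_inv _ hz).deriv, derivPoly]

theorem X_pow_dvd_derivPoly {j : ℕ} (hj : 1 ≤ j) : X ^ (j + 1) ∣ derivPoly j := by
  induction j, hj using Nat.le_induction with
  | base => exact ⟨C I, by simp [derivPoly]⟩
  | succ j hj ih =>
    have hderiv : X ^ j ∣ derivative (derivPoly j) := by
      simpa using pow_sub_one_dvd_derivative_of_pow_dvd ih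
    rw [derivPoly, show j + 1 + 1 = j + 2 from rfl, pow_add]
    exact mul_dvd_mul (dvd_sub (((pow_dvd_pow X j.le_succ).trans ih).mul_left _) hderiv) dvd_rfl

theorem natDegree_derivPoly_le (j : ℕ) : (derivPoly j).natDegree ≤ 2 * j := by
  induction j with
  | zero => simp [derivPoly]
  | succ j ih =>
    have hderiv := natDegree_derivative_le (derivPoly j)
    rw [derivPoly]
    refine natDegree_mul_le.trans (add_le_add (natDegree_sub_le _ _ |>.trans (max_le
      ((natDegree_C_mul_le _ _).trans ih) (by omega))) (natDegree_X_pow_le 2)) |>.trans ?_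
    omega

theorem coeff_derivPoly {j : ℕ} (hj : 1 ≤ j) :
    (derivPoly j).coeff (j + 1) = (-1) ^ (j + 1) * j.factorial * I := by
  induction j, hj using Nat.le_induction with
  | base => simp [derivPoly]
  | succ j hj ih =>
    have hlow : (derivPoly j).coeff j = 0 := X_pow_dvd_iff.1 (X_pow_dvd_derivPoly hj) j (by omega)
    rw [derivPoly, coeff_mul_X_pow, coeff_sub, coeff_C_mul, coeff_derivative, hlow, ih,
      Nat.factorial_succ]
    push_cast
    ring

noncomputable def dPoly (n : ℕ) : ℂ[X] :=
  C (-I) * ∑ k ∈ Icc 1 n, C ((-1 : ℂ) ^ (k + 1) * k.factorial) * bellPolynomial n k derivPoly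

theorem Dfun_eq_eval_dPoly (n : ℕ) {z : ℂ} (hz : z ≠ 0) : Dfun n z = (dPoly n).eval z⁻¹ := by
  have hbell : ∀ k : ℕ, bellPoly n k (fun j => iteratedDeriv j (fun w => exp (-I / w)) z) *
      exp (I * k / z) = (bellPolynomial n k derivPoly).eval z⁻¹ := fun k => by
    have hcancel : exp (-I / z) ^ k * exp (I * k / z) = 1 := by
      rw [← exp_nat_mul, ← exp_add, ← exp_zero]
      ring_nf
    simp only [iteratedDeriv_exp_neg_I_div _ hz, bellPoly_const_mul, eval_bellPolynomial]
    rw [mul_right_comm, hcancel, one_mul]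
  simp only [Dfun, dPoly, eval_mul, eval_C, eval_finsetSum, mul_assoc, hbell]

theorem X_pow_dvd_dPoly (n : ℕ) : X ^ (n + 1) ∣ dPoly n := by
  refine dvd_mul_of_dvd_right (dvd_sum fun k hk => ?_) _
  have hk : 1 ≤ k := (mem_Icc.1 hk).1
  exact ((pow_dvd_pow X (by omega)).trans
    (X_pow_dvd_bellPolynomial n k fun _ => X_pow_dvd_derivPoly)).mul_left _

theorem natDegree_dPoly_le (n : ℕ) : (dPoly n).natDegree ≤ 2 * n :=
  (natDegree_C_mul_le _ _).trans <| natDegree_sum_le_of_forall_le _ _ fun k _ =>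
    (natDegree_C_mul_le _ _).trans (natDegree_bellPolynomial_le n k natDegree_derivPoly_le)

theorem coeff_dPoly {n : ℕ} (hn : 1 ≤ n) :
    (dPoly n).coeff (n + 1) = (-1 : ℂ) ^ (n + 1) * n.factorial := by
  have hhigher : ∀ k ∈ Icc 1 n, k ≠ 1 →
      (C ((-1 : ℂ) ^ (k + 1) * k.factorial) * bellPolynomial n k derivPoly).coeff (n + 1) = 0 :=
    fun k hk hk1 => by
      have hk : 2 ≤ k := by simp only [mem_Icc] at hk; omega
      rw [coeff_C_mul, X_pow_dvd_iff.1 (X_pow_dvd_bellPolynomial n k fun _ => X_pow_dvd_derivPoly)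
        _ (by omega), mul_zero]
  rw [dPoly, coeff_C_mul, finsetSum_coeff, sum_eq_single_of_mem 1 (by simp [hn]) hhigher,
    coeff_C_mul, bellPolynomial_one hn, coeff_derivPoly hn]
  linear_combination -(-1 : ℂ) ^ (n + 1) * n.factorial * I_sq

theorem prod_Dfun_laurent_general (Q N : ℕ) (n : Fin Q → ℕ)
    (hn : ∀ j, 1 ≤ n j) (hsum : ∑ j, n j = N) :
    ∃ c : ℕ → ℂ,
      (∀ z : ℂ, z ≠ 0 →
        ∏ j, Dfun (n j) z / ((n j).factorial : ℂ)
          = ∑ m ∈ Finset.Icc (N + Q) (2 * N), c m * (z ^ m)⁻¹)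
      ∧ c (N + Q) = (-1 : ℂ) ^ (N + Q) := by
  set F : ℂ[X] := ∏ j, C ((n j).factorial : ℂ)⁻¹ * dPoly (n j)
  have hdvd : ∀ j ∈ univ, X ^ (n j + 1) ∣ C ((n j).factorial : ℂ)⁻¹ * dPoly (n j) :=
    fun j _ => (X_pow_dvd_dPoly _).mul_left _
  have hlow : ∑ j, (n j + 1) = N + Q := by simp [sum_add_distrib, hsum]
  have hF_dvd : X ^ (N + Q) ∣ F := by
    rw [← hlow, ← prod_pow_eq_pow_sum]
    exact prod_dvd_prod_of_dvd _ _ hdvd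
  have hF_deg : F.natDegree ≤ 2 * N := by
    rw [← hsum, mul_sum]
    exact (natDegree_prod_le _ _).trans
      (sum_le_sum fun j _ => (natDegree_C_mul_le _ _).trans (natDegree_dPoly_le _))
  refine ⟨F.coeff, fun z hz => ?_, ?_⟩
  · have hF : ∏ j, Dfun (n j) z / ((n j).factorial : ℂ) = F.eval z⁻¹ := by
      simp only [F, eval_prod, eval_mul, eval_C, Dfun_eq_eval_dPoly _ hz, div_eq_inv_mul]
    simp only [hF, eval_eq_sum_Icc_of_X_pow_dvd hF_dvd hF_deg, inv_pow]
  · have hfactor : ∀ j, (C ((n j).factorial : ℂ)⁻¹ * dPoly (n j)).coeff (n j + 1)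
        = (-1) ^ (n j + 1) := fun j => by
      rw [coeff_C_mul, coeff_dPoly (hn j), mul_comm, mul_assoc,
        mul_inv_cancel₀ (by exact_mod_cast (n j).factorial_ne_zero), mul_one]
    rw [← hlow, coeff_prod_of_X_pow_dvd _ _ _ hdvd]
    simp only [hfactor, prod_pow_eq_pow_sum]

/-- For positive integers `n₁, …, n_Q` with `n₁ + ⋯ + n_Q = N`, the product
`∏ⱼ D_{nⱼ}(z)/(nⱼ!)` is a Laurent polynomial in `1/z` with terms of degree between
`N + Q` and `2N`, whose lowest-order coefficient is `(−1)^{N+Q}`. -/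
theorem prod_Dfun_laurent (Q N : ℕ) (hQ : 1 ≤ Q) (n : Fin Q → ℕ)
    (hn : ∀ j, 1 ≤ n j) (hsum : ∑ j, n j = N) :
    ∃ c : ℕ → ℂ,
      (∀ z : ℂ, z ≠ 0 →
        ∏ j, Dfun (n j) z / ((n j).factorial : ℂ)
          = ∑ m ∈ Finset.Icc (N + Q) (2 * N), c m * (z ^ m)⁻¹)
      ∧ c (N + Q) = (-1 : ℂ) ^ (N + Q) :=
  prod_Dfun_laurent_general Q N n hn hsum
end

section
/- For complex numbers x and y with |x| < 1 and |y| < 1, the infinite product ∏_{n=1}^{∞} (1 − y·xⁿ)⁻¹ converges, the double series Σ_{N=0}^{∞} Σ_{k=0}^{N} λ(N|k)·x^N·y^k converges absolutely, and the two are equal: ∏_{n=1}^{∞} (1 − y·xⁿ)⁻¹ = Σ_{N=0}^{∞} Σ_{k=0}^{N} λ(N|k)·x^N·y^k. -/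
/-- `restrictedPartitionCount N k` is λ(N|k), the number of partitions of `N`
into exactly `k` parts (so `restrictedPartitionCount 0 0 = 1`). -/
def restrictedPartitionCount (N k : ℕ) : ℕ :=
  (Finset.univ.filter fun P : Nat.Partition N => P.parts.card = k).card

/-!
Expanding every factor `(1 - y xⁿ)⁻¹` into a geometric series turns the partial product over
`n ≤ M` into a sum over all multisets of parts from `[1, M]`, i.e. over the partitions with parts
at most `M`, a partition `P` of `N` contributing `x ^ N * y ^ #P`. For fixed `N` this truncated
coefficient is the full one once `M ≥ N`, and every truncation is dominated termwise by the real
series `∑_N ∑_P ‖x‖ ^ N * ‖y‖ ^ #P`. Its partial sums are bounded by the real partial products,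
hence by `exp (∑ₙ ‖y‖ ‖x‖ⁿ / (1 - ‖y‖))`, so it converges, and Tannery's theorem gives the limit.
-/

open Finset

section
variable {κ R : Type*} [NormedCommRing R] [CompleteSpace R]

theorem summable_norm_and_hasSum_prod_fin {n : ℕ} (f : Fin n → κ → R)
    (hf : ∀ i, Summable fun k => ‖f i k‖) :
    Summable (fun g : Fin n → κ => ‖∏ i, f i (g i)‖) ∧
      HasSum (fun g : Fin n → κ => ∏ i, f i (g i)) (∏ i, ∑' k, f i k) := by
  induction n with
  | zero => exact ⟨.of_finite, by simp⟩
  | succ n ih =>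
    obtain ⟨hnorm, hsum⟩ := ih (fun i => f i.succ) fun i => hf i.succ
    have hnorm_mul := Summable.mul_norm (hf 0) hnorm
    rw [← (Fin.consEquiv fun _ => κ).summable_iff, ← (Fin.consEquiv fun _ => κ).hasSum_iff]
    simpa [Function.comp_def, Fin.consEquiv, Fin.prod_univ_succ] using
      And.intro hnorm_mul ((hf 0).of_norm.hasSum.mul hsum hnorm_mul.of_norm)

theorem summable_norm_and_hasSum_prod_pi {ι : Type*} [Fintype ι] (f : ι → κ → R)
    (hf : ∀ i, Summable fun k => ‖f i k‖) :
    Summable (fun g : ι → κ => ‖∏ i, f i (g i)‖) ∧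
      HasSum (fun g : ι → κ => ∏ i, f i (g i)) (∏ i, ∑' k, f i k) := by
  let e := (Fintype.equivFin ι).symm
  obtain ⟨hnorm, hsum⟩ := summable_norm_and_hasSum_prod_fin (fun i => f (e i)) fun i => hf _
  rw [← (e.arrowCongr (Equiv.refl κ)).summable_iff, ← (e.arrowCongr (Equiv.refl κ)).hasSum_iff,
    ← e.prod_comp]
  simpa [Function.comp_def, ← e.prod_comp] using And.intro hnorm hsum

end

namespace Multiset

theorem prod_map_eq_prod_pow_count {ι M : Type*} [Fintype ι] [DecidableEq ι] [CommMonoid M]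
    (s : Multiset ι) (f : ι → M) : (s.map f).prod = ∏ i, f i ^ s.count i := by
  rw [Finset.prod_multiset_map_count]
  exact prod_subset (subset_univ _) fun i _ hi => by simp_all

theorem prod_map_pow_eq_pow_sum {M : Type*} [CommMonoid M] (s : Multiset ℕ) (x : M) :
    (s.map (x ^ ·)).prod = x ^ s.sum := by
  induction s using Multiset.induction_on with
  | empty => simp
  | cons n s ih => simp [ih, pow_add]

theorem prod_map_mul_pow {M : Type*} [CommMonoid M] (s : Multiset ℕ) (x y : M) :
    (s.map fun n => y * x ^ n).prod = x ^ s.sum * y ^ card s := by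
  rw [prod_map_mul, prod_map_pow_eq_pow_sum, map_const', prod_replicate, mul_comm]

end Multiset

theorem hasSum_prod_map_multiset {ι 𝕜 : Type*} [Fintype ι] [NormedField 𝕜] [CompleteSpace 𝕜]
    (z : ι → 𝕜) (hz : ∀ i, ‖z i‖ < 1) :
    HasSum (fun s : Multiset ι => (s.map z).prod) (∏ i, (1 - z i)⁻¹) := by
  classical
  let e : Multiset ι ≃ (ι → ℕ) := Multiset.toFinsupp.toEquiv.trans Finsupp.equivFunOnFinite
  have hsum := (summable_norm_and_hasSum_prod_pi (fun i k => z i ^ k)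
    fun i => summable_norm_geometric_of_norm_lt_one (hz i)).2
  simp only [fun i => tsum_geometric_of_norm_lt_one (hz i)] at hsum
  rw [← e.symm.hasSum_iff]
  convert hsum using 2 with g
  simp [e, Multiset.prod_map_eq_prod_pow_count]

namespace Nat.Partition

theorem card_parts_le {N : ℕ} (P : N.Partition) : P.parts.card ≤ N := by
  simpa [P.parts_sum] using Multiset.card_nsmul_le_sum (a := 1) fun i hi => P.parts_pos hi

theorem restricted_le_eq_univ {M N : ℕ} (h : N ≤ M) : restricted N (· ≤ M) = univ :=
  filter_true_of_mem fun _ _ _ hi => (le_of_mem_parts hi).trans h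

noncomputable def multisetIccEquivRestricted (M N : ℕ) :
    {s : Multiset (Icc 1 M) // (s.map (↑)).sum = N} ≃ restricted N (· ≤ M) :=
  Equiv.ofBijective
    (fun s => ⟨⟨s.1.map (↑), fun hi => by
        obtain ⟨i, -, rfl⟩ := Multiset.mem_map.1 hi
        exact (mem_Icc.1 i.2).1, s.2⟩,
      mem_filter.2 ⟨mem_univ _, fun i hi => by
        obtain ⟨i, -, rfl⟩ := Multiset.mem_map.1 hi
        exact (mem_Icc.1 i.2).2⟩⟩)
    ⟨fun s t hst => Subtype.ext <| Multiset.map_injective Subtype.val_injective <|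
        congrArg (fun P : restricted N (· ≤ M) => P.1.parts) hst,
      fun P => by
        have hP : ∀ i ∈ P.1.parts, i ∈ Icc 1 M := fun i hi =>
          mem_Icc.2 ⟨P.1.parts_pos hi, (mem_filter.1 P.2).2 i hi⟩
        obtain ⟨s, hs⟩ : ∃ s : Multiset (Icc 1 M), s.map (↑) = P.1.parts :=
          ⟨P.1.parts.pmap (fun i hi => ⟨i, hi⟩) hP,
            by simp [Multiset.map_pmap, Multiset.pmap_eq_map]⟩
        exact ⟨⟨s, hs ▸ P.1.parts_sum⟩, Subtype.ext (Nat.Partition.ext hs)⟩⟩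

@[simp]
theorem multisetIccEquivRestricted_apply_parts {M N : ℕ}
    (s : {s : Multiset (Icc 1 M) // (s.map (↑)).sum = N}) :
    (multisetIccEquivRestricted M N s : N.Partition).parts = s.1.map (↑) :=
  rfl

end Nat.Partition

theorem sum_range_restrictedPartitionCount_mul_pow {R : Type*} [CommSemiring R] (N : ℕ)
    (x y : R) :
    ∑ k ∈ range (N + 1), (restrictedPartitionCount N k : R) * x ^ N * y ^ k
      = ∑ P : N.Partition, x ^ N * y ^ P.parts.card := by
  rw [← sum_fiberwise_of_maps_to (t := range (N + 1)) (g := fun P : N.Partition => P.parts.card)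
    fun P _ => mem_range.2 (Nat.lt_succ_of_le P.card_parts_le)]
  refine sum_congr rfl fun k _ => ?_
  rw [sum_congr rfl fun P hP => by rw [(mem_filter.1 hP).2], sum_const, nsmul_eq_mul,
    restrictedPartitionCount, mul_assoc]

theorem hasSum_sum_restricted_pow_mul_pow_card {𝕜 : Type*} [NormedField 𝕜] [CompleteSpace 𝕜]
    {x y : 𝕜} (hx : ‖x‖ ≤ 1) (hy : ‖y‖ < 1) (M : ℕ) :
    HasSum (fun N => ∑ P ∈ Nat.Partition.restricted N (· ≤ M), x ^ N * y ^ P.parts.card)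
      (∏ n ∈ Icc 1 M, (1 - y * x ^ n)⁻¹) := by
  have hz (n : Icc 1 M) : ‖y * x ^ (n : ℕ)‖ < 1 := by
    rw [norm_mul, norm_pow]
    exact mul_lt_one_of_nonneg_of_lt_one_left (norm_nonneg _) hy (pow_le_one₀ (norm_nonneg _) hx)
  have hsum := (hasSum_prod_map_multiset _ hz).tsum_fiberwise
    fun s : Multiset (Icc 1 M) => (s.map Subtype.val).sum
  rw [prod_coe_sort (Icc 1 M) fun n => (1 - y * x ^ n)⁻¹] at hsum
  refine hsum.congr_fun fun N => ?_
  rw [← Finset.tsum_subtype, ← (Nat.Partition.multisetIccEquivRestricted M N).tsum_eq]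
  refine tsum_congr fun s => ?_
  have hs : (s.1.map Subtype.val).sum = N := s.2
  have hprod := Multiset.prod_map_mul_pow (s.1.map Subtype.val) x y
  rw [Multiset.map_map, hs] at hprod
  rw [Nat.Partition.multisetIccEquivRestricted_apply_parts]
  exact hprod.symm

theorem inv_one_sub_le_one_add_div {a s : ℝ} (ha : 0 ≤ a) (has : a ≤ s) (hs : s < 1) :
    (1 - a)⁻¹ ≤ 1 + a / (1 - s) := by
  rw [inv_le_iff_one_le_mul₀ (by linarith), one_add_div (by linarith), div_mul_eq_mul_div,
    le_div_iff₀ (by linarith)]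
  nlinarith

theorem prod_Icc_inv_one_sub_mul_pow_le {r s : ℝ} (hr0 : 0 ≤ r) (hr : r < 1) (hs0 : 0 ≤ s)
    (hs : s < 1) (M : ℕ) :
    ∏ n ∈ Icc 1 M, (1 - s * r ^ n)⁻¹ ≤ Real.exp (∑' n : ℕ, s * r ^ n / (1 - s)) := by
  have hle (n : ℕ) : s * r ^ n ≤ s := mul_le_of_le_one_right hs0 (pow_le_one₀ hr0 hr.le)
  have hterm (n : ℕ) : 0 ≤ s * r ^ n / (1 - s) :=
    div_nonneg (mul_nonneg hs0 (pow_nonneg hr0 n)) (by linarith)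
  have hsummable : Summable fun n : ℕ => s * r ^ n / (1 - s) :=
    ((summable_geometric_of_lt_one hr0 hr).mul_left s).div_const _
  calc ∏ n ∈ Icc 1 M, (1 - s * r ^ n)⁻¹
      ≤ ∏ n ∈ Icc 1 M, (1 + s * r ^ n / (1 - s)) :=
        prod_le_prod (fun n _ => inv_nonneg.2 (by linarith [hle n]))
          fun n _ => inv_one_sub_le_one_add_div (by positivity) (hle n) hs
    _ ≤ Real.exp (∑ n ∈ Icc 1 M, s * r ^ n / (1 - s)) := Real.prod_one_add_le_exp_sum _ hterm
    _ ≤ Real.exp (∑' n : ℕ, s * r ^ n / (1 - s)) :=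
        Real.exp_le_exp.2 (hsummable.sum_le_tsum _ fun n _ => hterm n)

theorem summable_sum_partitions_pow_mul_pow_card {r s : ℝ} (hr0 : 0 ≤ r) (hr : r < 1)
    (hs0 : 0 ≤ s) (hs : s < 1) :
    Summable fun N : ℕ => ∑ P : N.Partition, r ^ N * s ^ P.parts.card := by
  have hterm (N : ℕ) (P : N.Partition) : 0 ≤ r ^ N * s ^ P.parts.card := by positivity
  have htrunc (T : ℕ) := hasSum_sum_restricted_pow_mul_pow_card
    (by rw [Real.norm_of_nonneg hr0]; exact hr.le) (by rwa [Real.norm_of_nonneg hs0]) T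
  refine summable_of_sum_range_le (c := Real.exp (∑' n : ℕ, s * r ^ n / (1 - s)))
    (fun N => sum_nonneg fun P _ => hterm N P) fun T => ?_
  calc ∑ N ∈ range T, ∑ P : N.Partition, r ^ N * s ^ P.parts.card
      = ∑ N ∈ range T, ∑ P ∈ Nat.Partition.restricted N (· ≤ T), r ^ N * s ^ P.parts.card :=
        sum_congr rfl fun N hN => by
          rw [Nat.Partition.restricted_le_eq_univ (mem_range.1 hN).le]
    _ ≤ ∑' N, ∑ P ∈ Nat.Partition.restricted N (· ≤ T), r ^ N * s ^ P.parts.card :=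
        (htrunc T).summable.sum_le_tsum _ fun N _ => sum_nonneg fun P _ => hterm N P
    _ = ∏ n ∈ Icc 1 T, (1 - s * r ^ n)⁻¹ := (htrunc T).tsum_eq
    _ ≤ _ := prod_Icc_inv_one_sub_mul_pow_le hr0 hr hs0 hs T

/-- For `|x| < 1` and `|y| < 1`, the double series `Σ_{N≥0} Σ_{k=0}^{N} λ(N|k) x^N y^k`
converges absolutely, and the partial products `∏_{n=1}^{M} (1 − y xⁿ)⁻¹` converge to its
sum as `M → ∞`. -/
theorem prod_inv_tendsto_sum_restrictedPartitionCount (x y : ℂ)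
    (hx : ‖x‖ < 1) (hy : ‖y‖ < 1) :
    Summable (fun N : ℕ => ∑ k ∈ Finset.range (N + 1),
        ‖(restrictedPartitionCount N k : ℂ) * x ^ N * y ^ k‖)
    ∧ Filter.Tendsto
        (fun M : ℕ => ∏ n ∈ Finset.Icc 1 M, (1 - y * x ^ n)⁻¹)
        Filter.atTop
        (nhds (∑' N : ℕ, ∑ k ∈ Finset.range (N + 1),
          (restrictedPartitionCount N k : ℂ) * x ^ N * y ^ k)) := by
  have hdom := summable_sum_partitions_pow_mul_pow_card (norm_nonneg x) hx (norm_nonneg y) hy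
  simp only [norm_mul, norm_pow, Complex.norm_natCast, sum_range_restrictedPartitionCount_mul_pow]
  refine ⟨hdom, ?_⟩
  simp only [← fun M => (hasSum_sum_restricted_pow_mul_pow_card hx.le hy M).tsum_eq]
  refine tendsto_tsum_of_dominated_convergence hdom (fun N => ?_) (.of_forall fun M N => ?_)
  · refine tendsto_const_nhds.congr' ?_
    filter_upwards [Filter.eventually_ge_atTop N] with M hM
    rw [Nat.Partition.restricted_le_eq_univ hM]
  · calc ‖∑ P ∈ Nat.Partition.restricted N (· ≤ M), x ^ N * y ^ P.parts.card‖
        ≤ ∑ P ∈ Nat.Partition.restricted N (· ≤ M), ‖x‖ ^ N * ‖y‖ ^ P.parts.card :=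
          norm_sum_le_of_le _ fun P _ => by simp [norm_pow]
      _ ≤ ∑ P : N.Partition, ‖x‖ ^ N * ‖y‖ ^ P.parts.card :=
          sum_le_sum_of_subset_of_nonneg (subset_univ _) fun P _ _ => by positivity
end
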